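/- For every nonnegative integer n, the sum over i from 0 to n of (-1)^{n-i} q^{((n-i)^2-(n-i))/2} / ((q;q)_{n-i} (bq;q)_i) equals (-1)^n q^{n(n+1)/2} (1-b) / ((q;q)_n (1-b q^n)), as an identity of rational functions in q and b (equivalently, in the field of formal Laurent series). -/

import Mathlib

/-!
Write `c m = (-1)^m q^(m(m-1)/2) / (q;q)_m` and `S_n(b) = ∑_{i ≤ n} c (n - i) / (bq;q)_i`.
Splitting off the term `i = 0` and using `(bq;q)_{i+1} = (1 - bq) (bq²;q)_i` gives
`S_{n+1}(b) = c (n + 1) + S_n(bq) / (1 - bq)`, and the closed form `c n qⁿ (1 - b) / (1 - bqⁿ)`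
satisfies the same recursion, so the identity follows by induction on `n` for all `b` at once.
-/

open Finset

section QPochhammer

variable {R : Type*} [CommRing R]

def qPochhammer (a q : R) (m : ℕ) : R := ∏ k ∈ range m, (1 - a * q ^ k)

@[simp]
theorem qPochhammer_zero (a q : R) : qPochhammer a q 0 = 1 := prod_range_zero _

theorem qPochhammer_succ (a q : R) (m : ℕ) :
    qPochhammer a q (m + 1) = qPochhammer a q m * (1 - a * q ^ m) :=
  prod_range_succ _ _

theorem qPochhammer_mul_self (a q : R) (m : ℕ) :
    qPochhammer (a * q) q m = ∏ k ∈ range m, (1 - a * q ^ (k + 1)) := by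
  simp only [qPochhammer, mul_assoc, pow_succ']

theorem qPochhammer_succ' (a q : R) (m : ℕ) :
    qPochhammer a q (m + 1) = (1 - a) * qPochhammer (a * q) q m := by
  rw [qPochhammer_mul_self, qPochhammer, prod_range_succ', pow_zero, mul_one, mul_comm]

theorem qPochhammer_self (q : R) (m : ℕ) :
    qPochhammer q q m = ∏ k ∈ range m, (1 - q ^ (k + 1)) := by
  simpa using qPochhammer_mul_self (1 : R) q m

end QPochhammer

section Fine

variable {K : Type*} [Field K]

def fineCoeff (q : K) (m : ℕ) : K := (-1) ^ m * q ^ (m * (m - 1) / 2) / qPochhammer q q m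

def fineSum (q b : K) (n : ℕ) : K :=
  ∑ i ∈ range (n + 1), fineCoeff q (n - i) / qPochhammer (b * q) q i

theorem fineCoeff_succ (q : K) (m : ℕ) :
    fineCoeff q (m + 1) = -(q ^ m / (1 - q ^ (m + 1))) * fineCoeff q m := by
  rw [fineCoeff, fineCoeff, Nat.triangle_succ, qPochhammer_succ, ← pow_succ']
  simp only [div_eq_mul_inv, mul_inv, pow_add]
  ring

theorem fineSum_zero (q b : K) : fineSum q b 0 = 1 := by
  simp [fineSum, fineCoeff]

theorem fineSum_succ (q b : K) (n : ℕ) :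
    fineSum q b (n + 1) = fineCoeff q (n + 1) + fineSum q (b * q) n / (1 - b * q) := by
  rw [fineSum, sum_range_succ', fineSum, sum_div, add_comm]
  congr 1
  · simp
  · refine sum_congr rfl fun i _ => ?_
    rw [Nat.add_sub_add_right, qPochhammer_succ', div_div, mul_comm]

theorem fineSum_eq {q b : K} (hq : ∀ k : ℕ, 1 ≤ k → q ^ k ≠ 1) (hb : ∀ k : ℕ, b * q ^ k ≠ 1)
    (n : ℕ) : fineSum q b n = fineCoeff q n * q ^ n * (1 - b) / (1 - b * q ^ n) := by
  induction n generalizing b with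
  | zero =>
    have hb₀ : 1 - b ≠ 0 := sub_ne_zero.2 (by simpa using (hb 0).symm)
    simp [fineSum_zero, fineCoeff, hb₀]
  | succ n ih =>
    have hbq : ∀ k : ℕ, b * q * q ^ k ≠ 1 := fun k => by
      simpa only [mul_assoc, ← pow_succ'] using hb (k + 1)
    have h₁ : 1 - b * q ≠ 0 := sub_ne_zero.2 (by simpa using (hb 1).symm)
    have h₂ : 1 - b * q ^ (n + 1) ≠ 0 := sub_ne_zero.2 (hb (n + 1)).symm
    have h₃ : 1 - q ^ (n + 1) ≠ 0 := sub_ne_zero.2 (hq (n + 1) n.succ_pos).symm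
    rw [fineSum_succ, ih hbq, fineCoeff_succ, mul_assoc b q, ← pow_succ']
    rw [div_right_comm, mul_div_cancel_right₀ _ h₁]
    calc -(q ^ n / (1 - q ^ (n + 1))) * fineCoeff q n
          + fineCoeff q n * q ^ n / (1 - b * q ^ (n + 1))
        = fineCoeff q n * q ^ n * ((1 - b * q ^ (n + 1))⁻¹ - (1 - q ^ (n + 1))⁻¹) := by ring
      _ = _ := by
        rw [inv_sub_inv' h₂ h₃]
        ring

end Fine

/-- Fine's identity [Fine, eq. (16.3) with a → 0]: for every nonnegative integer `n`,
`∑_{i=0}^n (-1)^{n-i} q^{((n-i)² - (n-i))/2} / ((q;q)_{n-i} (bq;q)_i)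
  = (-1)^n q^{n(n+1)/2} (1-b) / ((q;q)_n (1 - b qⁿ))`,
as an identity of rational functions in `q` and `b`. -/
theorem fine_identity (K : Type*) [Field K] (q b : K)
    (hq : ∀ k : ℕ, 1 ≤ k → q ^ k ≠ 1) (hb : ∀ k : ℕ, b * q ^ k ≠ 1) (n : ℕ) :
    ∑ i ∈ range (n + 1),
      (-1 : K) ^ (n - i) * q ^ ((n - i) * (n - i - 1) / 2) /
        ((∏ k ∈ range (n - i), (1 - q ^ (k + 1))) *
          (∏ k ∈ range i, (1 - b * q ^ (k + 1))))
      = (-1 : K) ^ n * q ^ (n * (n + 1) / 2) * (1 - b) /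
          ((∏ k ∈ range n, (1 - q ^ (k + 1))) * (1 - b * q ^ n)) := by
  have h := fineSum_eq hq hb n
  simp only [fineSum, fineCoeff, qPochhammer_self, qPochhammer_mul_self, div_div] at h
  have hexp : n * (n + 1) / 2 = n * (n - 1) / 2 + n := by
    simpa [mul_comm] using Nat.triangle_succ n
  rw [h, hexp, pow_add]
  simp only [div_eq_mul_inv, mul_inv]
  ring
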